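/- Fix an integer n ≥ 1 and real numbers λ, ξ with ξ ≥ n·|λ| and ξ + λ² > 0. Then the set of eigenvalues of the matrix m₁(λ,ξ) is exactly the three-element set {0, n/2 + a, n/2 − a}, where a = √(ξ + λ² + n²/4); equivalently, the set of eigenvalues of d₁ = (ξ+λ²)·I₃ + m₁ is {ξ+λ², ξ+λ²+n/2+√(ξ+λ²+n²/4), ξ+λ²+n/2−√(ξ+λ²+n²/4)}, and these three values are pairwise distinct. -/

import Mathlib

open Complex Matrix

/-- The matrix `m₁ = m₁(λ,ξ)` of Lemma 5.2, with rows
`(−λ, 0, −i√((ξ−nλ)/2))`, `(0, λ, i√((ξ+nλ)/2))`, `(i√((ξ−nλ)/2), −i√((ξ+nλ)/2), n)`. -/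
noncomputable def m1 (n : ℕ) (lam ξ : ℝ) : Matrix (Fin 3) (Fin 3) ℂ :=
  !![(-lam : ℂ), 0, -Complex.I * (Real.sqrt ((ξ - n * lam) / 2) : ℂ);
     0, (lam : ℂ), Complex.I * (Real.sqrt ((ξ + n * lam) / 2) : ℂ);
     Complex.I * (Real.sqrt ((ξ - n * lam) / 2) : ℂ),
       -Complex.I * (Real.sqrt ((ξ + n * lam) / 2) : ℂ), (n : ℂ)]

lemma spec_mem_iff_det (M : Matrix (Fin 3) (Fin 3) ℂ) (μ : ℂ) :
    μ ∈ spectrum ℂ M ↔ (μ • (1 : Matrix (Fin 3) (Fin 3) ℂ) - M).det = 0 := by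
  rw [spectrum.mem_iff, Matrix.isUnit_iff_isUnit_det, isUnit_iff_ne_zero, not_ne_iff,
    Algebra.algebraMap_eq_smul_one]

lemma det_m1 (n : ℕ) (lam ξ : ℝ) (h : (n : ℝ) * |lam| ≤ ξ)
    (hpos : 0 < ξ + lam ^ 2) (μ : ℂ) :
    (μ • (1 : Matrix (Fin 3) (Fin 3) ℂ) - m1 n lam ξ).det =
      μ * (μ - ((n : ℂ) / 2 + (Real.sqrt (ξ + lam ^ 2 + (n : ℝ) ^ 2 / 4) : ℂ))) *
        (μ - ((n : ℂ) / 2 - (Real.sqrt (ξ + lam ^ 2 + (n : ℝ) ^ 2 / 4) : ℂ))) := by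
  have hm : 0 ≤ (ξ - n * lam) / 2 := by
    nlinarith [le_abs_self lam, neg_abs_le lam, n.cast_nonneg (α := ℝ)]
  have hp : 0 ≤ (ξ + n * lam) / 2 := by
    nlinarith [le_abs_self lam, neg_abs_le lam, n.cast_nonneg (α := ℝ)]
  have hT : ((Real.sqrt ((ξ + n * lam) / 2) : ℂ))^2 = ((ξ:ℂ) + n * lam) / 2 := by
    rw [← Complex.ofReal_pow, Real.sq_sqrt hp]; push_cast; ring
  have hU : ((Real.sqrt ((ξ - n * lam) / 2) : ℂ))^2 = ((ξ:ℂ) - n * lam) / 2 := by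
    rw [← Complex.ofReal_pow, Real.sq_sqrt hm]; push_cast; ring
  have ha : ((Real.sqrt (ξ + lam ^ 2 + (n : ℝ) ^ 2 / 4) : ℂ))^2
      = (ξ:ℂ) + (lam:ℂ) ^ 2 + (n:ℂ) ^ 2 / 4 := by
    rw [← Complex.ofReal_pow, Real.sq_sqrt (by nlinarith)]; push_cast; ring
  simp only [m1, neg_mul, det_fin_three, Fin.isValue, Matrix.sub_apply,
    Matrix.smul_apply, one_apply_eq, smul_eq_mul, mul_one, of_apply, cons_val', cons_val_zero,
    empty_val', cons_val_fin_one, sub_neg_eq_add, cons_val_one, head_cons, cons_val_two,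
    Nat.succ_eq_add_one, Nat.reduceAdd, tail_cons, head_fin_const, ne_eq, Fin.reduceEq,
    not_false_eq_true, one_apply_ne, mul_zero, zero_sub, mul_neg, zero_add, zero_ne_one,
    sub_self, one_ne_zero, zero_mul, sub_zero, neg_zero, add_zero]
  linear_combination ((μ + (lam:ℂ)) * ((Real.sqrt ((ξ + n * lam) / 2) : ℂ))^2
      + (μ - (lam:ℂ)) * ((Real.sqrt ((ξ - n * lam) / 2) : ℂ))^2) * Complex.I_sq
    - (μ + (lam:ℂ)) * hT - (μ - (lam:ℂ)) * hU + μ * ha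


/-- Lemma 5.2, eigenvalues: for `ξ ≥ n|λ|` and `ξ + λ² > 0`, the
spectrum of `m₁` is exactly `{0, n/2 + a, n/2 − a}` with `a = √(ξ+λ²+n²/4)`;
equivalently the spectrum of `d₁ = (ξ+λ²)I₃ + m₁` is
`{ξ+λ², ξ+λ²+n/2+a, ξ+λ²+n/2−a}`, and these three values are pairwise distinct. -/
theorem stmt_5 (n : ℕ) (hn : 1 ≤ n) (lam ξ : ℝ) (h : (n : ℝ) * |lam| ≤ ξ)
    (hpos : 0 < ξ + lam ^ 2) :
    spectrum ℂ (m1 n lam ξ) =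
      {0, (n : ℂ) / 2 + (Real.sqrt (ξ + lam ^ 2 + (n : ℝ) ^ 2 / 4) : ℂ),
        (n : ℂ) / 2 - (Real.sqrt (ξ + lam ^ 2 + (n : ℝ) ^ 2 / 4) : ℂ)} ∧
    spectrum ℂ
        (((ξ : ℂ) + (lam : ℂ) ^ 2) • (1 : Matrix (Fin 3) (Fin 3) ℂ) + m1 n lam ξ) =
      {(ξ : ℂ) + (lam : ℂ) ^ 2,
        (ξ : ℂ) + (lam : ℂ) ^ 2 + (n : ℂ) / 2 +
          (Real.sqrt (ξ + lam ^ 2 + (n : ℝ) ^ 2 / 4) : ℂ),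
        (ξ : ℂ) + (lam : ℂ) ^ 2 + (n : ℂ) / 2 -
          (Real.sqrt (ξ + lam ^ 2 + (n : ℝ) ^ 2 / 4) : ℂ)} ∧
    ((ξ : ℂ) + (lam : ℂ) ^ 2 ≠
        (ξ : ℂ) + (lam : ℂ) ^ 2 + (n : ℂ) / 2 +
          (Real.sqrt (ξ + lam ^ 2 + (n : ℝ) ^ 2 / 4) : ℂ) ∧
      (ξ : ℂ) + (lam : ℂ) ^ 2 ≠
        (ξ : ℂ) + (lam : ℂ) ^ 2 + (n : ℂ) / 2 -
          (Real.sqrt (ξ + lam ^ 2 + (n : ℝ) ^ 2 / 4) : ℂ) ∧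
      (ξ : ℂ) + (lam : ℂ) ^ 2 + (n : ℂ) / 2 +
          (Real.sqrt (ξ + lam ^ 2 + (n : ℝ) ^ 2 / 4) : ℂ) ≠
        (ξ : ℂ) + (lam : ℂ) ^ 2 + (n : ℂ) / 2 -
          (Real.sqrt (ξ + lam ^ 2 + (n : ℝ) ^ 2 / 4) : ℂ)) := by
  set aR : ℝ := Real.sqrt (ξ + lam ^ 2 + (n : ℝ) ^ 2 / 4) with haR
  have haR2 : aR ^ 2 = ξ + lam ^ 2 + (n : ℝ) ^ 2 / 4 := Real.sq_sqrt (by nlinarith)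
  have haRnn : 0 ≤ aR := Real.sqrt_nonneg _
  have hn1 : (1 : ℝ) ≤ (n : ℝ) := by exact_mod_cast hn
  have hgt : (n : ℝ) / 2 < aR := by nlinarith
  have h1 : (0 : ℝ) < (n : ℝ) / 2 + aR := by nlinarith
  have h3 : (0 : ℝ) < aR := by nlinarith
  refine ⟨?_, ?_, ?_, ?_, ?_⟩
  · ext μ
    rw [spec_mem_iff_det, det_m1 n lam ξ h hpos μ]
    simp only [mul_eq_zero, Set.mem_insert_iff, Set.mem_singleton_iff, sub_eq_zero]
    tauto
  · ext μ
    rw [spec_mem_iff_det]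
    have hmat : μ • (1 : Matrix (Fin 3) (Fin 3) ℂ) -
        (((ξ : ℂ) + (lam : ℂ) ^ 2) • (1 : Matrix (Fin 3) (Fin 3) ℂ) + m1 n lam ξ) =
        (μ - ((ξ : ℂ) + (lam : ℂ) ^ 2)) • (1 : Matrix (Fin 3) (Fin 3) ℂ) - m1 n lam ξ := by
      rw [sub_smul]; abel
    rw [hmat, det_m1 n lam ξ h hpos]
    simp only [mul_eq_zero, Set.mem_insert_iff, Set.mem_singleton_iff, sub_eq_zero]
    constructor
    · rintro ((h' | h') | h')
      · exact Or.inl (by linear_combination h')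
      · exact Or.inr (Or.inl (by linear_combination h'))
      · exact Or.inr (Or.inr (by linear_combination h'))
    · rintro (h' | h' | h')
      · exact Or.inl (Or.inl (by linear_combination h'))
      · exact Or.inl (Or.inr (by linear_combination h'))
      · exact Or.inr (by linear_combination h')
  · intro hEq
    have : (((n : ℝ) / 2 + aR : ℝ) : ℂ) = 0 := by push_cast; linear_combination -hEq
    exact h1.ne' (by exact_mod_cast this)
  · intro hEq
    have : (((n : ℝ) / 2 - aR : ℝ) : ℂ) = 0 := by push_cast; linear_combination -hEq
    have : (n : ℝ) / 2 - aR = 0 := by exact_mod_cast this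
    nlinarith
  · intro hEq
    have : ((2 * aR : ℝ) : ℂ) = 0 := by push_cast; linear_combination hEq
    have : (2 : ℝ) * aR = 0 := by exact_mod_cast this
    nlinarith
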